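/- arXiv:math/0609821 — 6 statements merged into one kernel-verified Lean document; each statement's English description precedes it below -/
import Mathlib

section
/- Let p, q be integers with 2 ≤ p ≤ q and (p, q) ≠ (2, 2). Then the maximum over integers k with 1 ≤ k ≤ p of the quantity p + k(k−1) + (p+q−2k)(p+q−1−2k)/2 − (q−p)(q−p−1)/2 equals 1 + 2(p−1)(q−1). -/
/-- `2 ∣ m * n` when `n = m - 1` (product of consecutive integers). -/
lemma aux_even_div (m n : ℤ) (h : n = m - 1) : 2 * (m * n / 2) = m * n := by
  apply Int.mul_ediv_cancel'
  rcases Int.even_or_odd m with ⟨t, ht⟩ | ⟨t, ht⟩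
  · exact ⟨t * n, by rw [ht]; ring⟩
  · exact ⟨t * m, by rw [h, ht]; ring⟩

/-- AIII: for integers `2 ≤ p ≤ q` with `(p, q) ≠ (2, 2)`, the maximum over
`1 ≤ k ≤ p` of `p + k(k-1) + (p+q-2k)(p+q-1-2k)/2 - (q-p)(q-p-1)/2` equals
`1 + 2(p-1)(q-1)`. -/
theorem stmt_4 (p q : ℤ) (hp : 2 ≤ p) (hpq : p ≤ q) (hne : (p, q) ≠ (2, 2)) :
    (∃ k : ℤ, 1 ≤ k ∧ k ≤ p ∧
      p + k * (k - 1) + (p + q - 2 * k) * (p + q - 1 - 2 * k) / 2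
        - (q - p) * (q - p - 1) / 2 = 1 + 2 * (p - 1) * (q - 1)) ∧
    (∀ k : ℤ, 1 ≤ k → k ≤ p →
      p + k * (k - 1) + (p + q - 2 * k) * (p + q - 1 - 2 * k) / 2
        - (q - p) * (q - p - 1) / 2 ≤ 1 + 2 * (p - 1) * (q - 1)) := by
  have hq : 3 ≤ q := by
    by_contra h
    push_neg at h
    have hq2 : q = 2 := by omega
    have hp2 : p = 2 := by omega
    exact hne (by simp [hp2, hq2])
  have hb := aux_even_div (q - p) (q - p - 1) (by ring)
  constructor
  · refine ⟨1, le_refl 1, by omega, ?_⟩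
    have ha := aux_even_div (p + q - 2 * 1) (p + q - 1 - 2 * 1) (by ring)
    nlinarith [ha, hb]
  · intro k hk1 hkp
    have ha := aux_even_div (p + q - 2 * k) (p + q - 1 - 2 * k) (by ring)
    have hnn : 0 ≤ (k - 1) * (2 * (p + q) - 3 * k - 3) :=
      mul_nonneg (by omega) (by omega)
    nlinarith [ha, hb, hnn]
end

section
/- Let p, q be integers with 2 ≤ p ≤ q and p + q odd, and set l = (p + q − 1)/2. Then the maximum over integers k with 1 ≤ k ≤ p of the quantity 2p − k + k(k−1)/2 + (l−k)(l−1−k) − (l−p)(l−1−p) equals 1 + (p−1)(q−1), and it is attained at k = 1. -/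
/-- BDI with p + q odd: for integers `2 ≤ p ≤ q` with `p + q` odd and
`l = (p+q-1)/2`, the maximum over `1 ≤ k ≤ p` of
`2p - k + k(k-1)/2 + (l-k)(l-1-k) - (l-p)(l-1-p)` equals `1 + (p-1)(q-1)`,
attained at `k = 1`. -/
theorem stmt_6 (p q l : ℤ) (hp : 2 ≤ p) (hpq : p ≤ q) (hodd : Odd (p + q))
    (hl : l = (p + q - 1) / 2) :
    (2 * p - 1 + 1 * (1 - 1) / 2 + (l - 1) * (l - 1 - 1) - (l - p) * (l - 1 - p)
        = 1 + (p - 1) * (q - 1)) ∧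
    (∀ k : ℤ, 1 ≤ k → k ≤ p →
      2 * p - k + k * (k - 1) / 2 + (l - k) * (l - 1 - k) - (l - p) * (l - 1 - p)
        ≤ 1 + (p - 1) * (q - 1)) := by
  obtain ⟨n, hn⟩ := hodd
  have hl2 : l = n := by
    rw [hl, hn]
    omega
  have hn2 : p + q = 2 * l + 1 := by omega
  -- p + q odd and p ≤ q forces q ≥ p + 1
  have hq1 : p + 1 ≤ q := by omega
  constructor
  · have : (1 : ℤ) * (1 - 1) / 2 = 0 := by norm_num
    rw [this]
    nlinarith [sq_nonneg (l - p)]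
  · intro k hk1 hkp
    have heven : (2 : ℤ) ∣ k * (k - 1) := by
      rcases Int.even_or_odd k with ⟨m, hm⟩ | ⟨m, hm⟩
      · exact ⟨m * (k - 1), by rw [hm]; ring⟩
      · exact ⟨k * m, by rw [hm]; ring⟩
    obtain ⟨d, hd⟩ := heven
    rw [hd, Int.mul_ediv_cancel_left _ (by norm_num)]
    have key : 0 ≤ (k - 1) * (2 * p + 2 * q - 4 - 3 * k) := by
      apply mul_nonneg (by omega)
      omega
    nlinarith [key]
end

section
/- Let p, q be integers with 2 ≤ p ≤ q, q ≥ 4 and p + q even, and set l = (p + q)/2. Then the maximum over integers k with 1 ≤ k ≤ p of the quantity p + k(k−1)/2 + (l−k)(l−1−k) − (l−p)(l−1−p) equals 1 + (p−1)(q−1), and it is attained at k = 1. -/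
/-- DI with p + q even: for integers `2 ≤ p ≤ q` with `q ≥ 4`, `p + q` even and
`l = (p+q)/2`, the maximum over `1 ≤ k ≤ p` of
`p + k(k-1)/2 + (l-k)(l-1-k) - (l-p)(l-1-p)` equals `1 + (p-1)(q-1)`,
attained at `k = 1`. -/
theorem stmt_7 (p q l : ℤ) (hp : 2 ≤ p) (hpq : p ≤ q) (hq : 4 ≤ q)
    (heven : Even (p + q)) (hl : l = (p + q) / 2) :
    (p + 1 * (1 - 1) / 2 + (l - 1) * (l - 1 - 1) - (l - p) * (l - 1 - p)
        = 1 + (p - 1) * (q - 1)) ∧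
    (∀ k : ℤ, 1 ≤ k → k ≤ p →
      p + k * (k - 1) / 2 + (l - k) * (l - 1 - k) - (l - p) * (l - 1 - p)
        ≤ 1 + (p - 1) * (q - 1)) := by
  have h2l : 2 * l = p + q := by
    obtain ⟨t, ht⟩ := heven
    omega
  have hql : q = 2 * l - p := by omega
  constructor
  · subst hql
    ring_nf
  · intro k hk1 hkp
    obtain ⟨m, hm⟩ := Int.even_mul_succ_self (k - 1)
    have hdiv : k * (k - 1) / 2 = m := by
      have : k * (k - 1) = m * 2 := by linarith [hm]
      rw [this, Int.mul_ediv_cancel _ two_ne_zero]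
    rw [hdiv]
    have hfact : 0 ≤ (k - 1) * (4 * l - 4 - 3 * k) := by
      apply mul_nonneg <;> omega
    nlinarith [hm, hfact]
end

section
/- Let p, q be integers with 2 ≤ p ≤ q and p + q ≥ 5. Then the maximum over integers k with 1 ≤ k ≤ p of the quantity 2p − k + 2k(k−1) + (p+q−2k)(p+q−1−2k) − (q−p)(q−p−1) equals 1 + 4(p−1)(q−1), and it is attained at k = 1. -/
/-- CII: for integers `2 ≤ p ≤ q` with `p + q ≥ 5`, the maximum over `1 ≤ k ≤ p`
of `2p - k + 2k(k-1) + (p+q-2k)(p+q-1-2k) - (q-p)(q-p-1)` equals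
`1 + 4(p-1)(q-1)`, attained at `k = 1`. -/
theorem stmt_12 (p q : ℤ) (hp : 2 ≤ p) (hpq : p ≤ q) (hsum : 5 ≤ p + q) :
    (2 * p - 1 + 2 * 1 * (1 - 1) + (p + q - 2 * 1) * (p + q - 1 - 2 * 1)
        - (q - p) * (q - p - 1) = 1 + 4 * (p - 1) * (q - 1)) ∧
    (∀ k : ℤ, 1 ≤ k → k ≤ p →
      2 * p - k + 2 * k * (k - 1) + (p + q - 2 * k) * (p + q - 1 - 2 * k)
        - (q - p) * (q - p - 1) ≤ 1 + 4 * (p - 1) * (q - 1)) := by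
  constructor
  · ring
  · intro k hk1 hkp
    nlinarith [mul_nonneg (by linarith : (0:ℤ) ≤ k - 1) (by linarith : (0:ℤ) ≤ p - k),
      mul_nonneg (by linarith : (0:ℤ) ≤ k - 1) (by linarith : (0:ℤ) ≤ q - k),
      mul_nonneg (by linarith : (0:ℤ) ≤ k - 1) (by linarith : (0:ℤ) ≤ p + q - 5)]
end

section
/- Let n ≥ 2 and work in ℚ^n with standard basis e_1, …, e_n. Define α_i = e_i − e_{i+1} for 1 ≤ i ≤ n−1 and α_n = 2e_n. Then (α_1, …, α_n) is a basis of ℚ^n, and for every integer k with 1 ≤ k ≤ n, the number of elements of the set Φ⁺ = {2e_i : 1 ≤ i ≤ n} ∪ {e_i − e_j : 1 ≤ i < j ≤ n} ∪ {e_i + e_j : 1 ≤ i < j ≤ n} whose coordinate at α_k in this basis equals 0 is (n−k) + k(k−1)/2 + (n−k)(n−1−k). -/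
/-! The `α_k`-coordinate of `v` in the basis of simple roots is `c_k⁻¹ (v_1 + ⋯ + v_k)`, where
`c_k ∈ {1, 2}` is the `e_k`-coefficient of `α_k`: the partial sums of `α_i` telescope to
`c_k δ_{ik}`. Hence a positive root has vanishing `α_k`-coordinate iff its first `k` coordinates
sum to zero, that is, `2e_i` for `i > k`, `e_i - e_j` for `i, j` on the same side of `k`, and
`e_i + e_j` for `k < i < j`. Counting these gives `(n - k) + C(k, 2) + 2 C(n - k, 2)`. -/

open Finset

namespace TypeC

section SimpleRootBasis

variable {K : Type*} [Field K] {n : ℕ}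

def simpleRoot (i : Fin n) : Fin n → K :=
  if h : i.val + 1 < n then Pi.single i 1 - Pi.single (⟨i.val + 1, h⟩ : Fin n) 1
  else (2 : K) • Pi.single i 1

def simpleRootLeadingCoeff (k : Fin n) : K := if k.val + 1 < n then 1 else 2

lemma simpleRootLeadingCoeff_ne_zero [NeZero (2 : K)] (k : Fin n) :
    (simpleRootLeadingCoeff k : K) ≠ 0 := by
  unfold simpleRootLeadingCoeff; split_ifs
  exacts [one_ne_zero, two_ne_zero]

variable (K) in
def partialSum (k : Fin n) : (Fin n → K) →ₗ[K] K := ∑ j ∈ Iic k, LinearMap.proj j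

lemma partialSum_apply (k : Fin n) (v : Fin n → K) : partialSum K k v = ∑ j ∈ Iic k, v j := by
  simp [partialSum]

lemma partialSum_single (k i : Fin n) (c : K) :
    partialSum K k (Pi.single i c) = if i ≤ k then c else 0 := by
  simp [partialSum_apply, sum_pi_single']

lemma partialSum_simpleRoot (k i : Fin n) :
    partialSum K k (simpleRoot i : Fin n → K) =
      if i = k then simpleRootLeadingCoeff k else 0 := by
  unfold simpleRoot simpleRootLeadingCoeff
  split_ifs <;>
    simp only [map_sub, map_smul, smul_eq_mul, partialSum_single, Fin.ext_iff, Fin.le_def] at * <;>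
    grind

variable (K n) in
def simpleRootCoord : (Fin n → K) →ₗ[K] (Fin n → K) :=
  LinearMap.pi fun k => (simpleRootLeadingCoeff k : K)⁻¹ • partialSum K k

lemma simpleRootCoord_apply (v : Fin n → K) (k : Fin n) :
    simpleRootCoord K n v k = (simpleRootLeadingCoeff k)⁻¹ * partialSum K k v := rfl

variable [NeZero (2 : K)]

lemma simpleRootCoord_simpleRoot (i : Fin n) :
    simpleRootCoord K n (simpleRoot i) = Pi.single i 1 := by
  ext k
  rw [simpleRootCoord_apply, partialSum_simpleRoot]
  obtain rfl | hik := eq_or_ne i k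
  · simp [simpleRootLeadingCoeff_ne_zero]
  · simp [hik]

lemma simpleRootCoord_bijective : Function.Bijective (simpleRootCoord K n) := by
  have hsurj : Function.Surjective (simpleRootCoord K n) := fun w =>
    ⟨∑ i, w i • simpleRoot i,
      by simp [map_sum, simpleRootCoord_simpleRoot, ← pi_eq_sum_univ']⟩
  exact ⟨LinearMap.injective_iff_surjective.mpr hsurj, hsurj⟩

variable (K n) in
noncomputable def simpleRootBasis : Module.Basis (Fin n) K (Fin n → K) :=
  .ofEquivFun (.ofBijective _ simpleRootCoord_bijective)

lemma simpleRootBasis_apply (i : Fin n) : simpleRootBasis K n i = simpleRoot i := by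
  rw [simpleRootBasis, Module.Basis.coe_ofEquivFun, LinearEquiv.symm_apply_eq]
  exact (simpleRootCoord_simpleRoot i).symm

lemma simpleRootBasis_repr_eq_zero_iff (v : Fin n → K) (k : Fin n) :
    (simpleRootBasis K n).repr v k = 0 ↔ partialSum K k v = 0 := by
  rw [simpleRootBasis, Module.Basis.ofEquivFun_repr_apply, LinearEquiv.ofBijective_apply,
    simpleRootCoord_apply, mul_eq_zero,
    or_iff_right (inv_ne_zero (simpleRootLeadingCoeff_ne_zero k))]

end SimpleRootBasis

variable {n : ℕ}

variable (n) in
def increasingPairs : Finset (Fin n × Fin n) := univ.filter fun p => p.1 < p.2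

variable (n) in
def longRoots : Finset (Fin n → ℚ) := univ.image fun i => (2 : ℚ) • Pi.single i 1

variable (n) in
def shortRootsSub : Finset (Fin n → ℚ) :=
  (increasingPairs n).image fun p => Pi.single p.1 1 - Pi.single p.2 1

variable (n) in
def shortRootsAdd : Finset (Fin n → ℚ) :=
  (increasingPairs n).image fun p => Pi.single p.1 1 + Pi.single p.2 1

variable (n) in
def positiveRoots : Finset (Fin n → ℚ) := longRoots n ∪ shortRootsSub n ∪ shortRootsAdd n

lemma two_smul_single_injective :
    Function.Injective fun i : Fin n => (2 : ℚ) • (Pi.single i 1 : Fin n → ℚ) := by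
  intro i j h
  have := congrFun h i
  simp only [Pi.smul_apply, Pi.single_apply] at this
  split_ifs at this <;> simp_all

lemma single_sub_single_injOn :
    Set.InjOn (fun p : Fin n × Fin n => (Pi.single p.1 1 : Fin n → ℚ) - Pi.single p.2 1)
      {p | p.1 ≠ p.2} := by
  intro p hp q hq h
  have h₁ := congrFun h p.1
  have h₂ := congrFun h p.2
  simp only [Set.mem_ofPred_eq, Pi.sub_apply, Pi.single_apply] at hp hq h₁ h₂
  split_ifs at h₁ h₂ <;> simp_all [Prod.ext_iff]
  norm_num at h₂

lemma single_add_single_injOn :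
    Set.InjOn (fun p : Fin n × Fin n => (Pi.single p.1 1 : Fin n → ℚ) + Pi.single p.2 1)
      {p | p.1 < p.2} := by
  intro p hp q hq h
  have h₁ := congrFun h p.1
  have h₂ := congrFun h p.2
  simp only [Set.mem_ofPred_eq, Pi.add_apply, Pi.single_apply] at hp hq h₁ h₂
  rw [Prod.ext_iff, Fin.ext_iff, Fin.ext_iff]
  simp only [Fin.lt_def, Fin.ext_iff] at hp hq h₁ h₂
  split_ifs at h₁ h₂ <;> (try norm_num at h₁) <;> (try norm_num at h₂) <;> omega

lemma disjoint_longRoots_shortRootsSub : Disjoint (longRoots n) (shortRootsSub n) := by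
  simp only [disjoint_left, longRoots, shortRootsSub, increasingPairs, mem_image, mem_filter,
    mem_univ, true_and]
  rintro v ⟨i, rfl⟩ ⟨p, hp, h⟩
  have := congrFun h p.1
  simp only [Pi.smul_apply, Pi.sub_apply, Pi.single_apply] at this
  split_ifs at this <;> simp_all

lemma disjoint_longRoots_shortRootsAdd : Disjoint (longRoots n) (shortRootsAdd n) := by
  simp only [disjoint_left, longRoots, shortRootsAdd, increasingPairs, mem_image, mem_filter,
    mem_univ, true_and]
  rintro v ⟨i, rfl⟩ ⟨p, hp, h⟩
  have := congrFun h p.1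
  simp only [Pi.smul_apply, Pi.add_apply, Pi.single_apply] at this
  split_ifs at this <;> simp_all

lemma disjoint_shortRootsSub_shortRootsAdd : Disjoint (shortRootsSub n) (shortRootsAdd n) := by
  simp only [disjoint_left, shortRootsSub, shortRootsAdd, increasingPairs, mem_image, mem_filter,
    mem_univ, true_and]
  rintro v ⟨p, hp, rfl⟩ ⟨q, hq, h⟩
  have := congrFun h p.2
  simp only [Pi.sub_apply, Pi.add_apply, Pi.single_apply, Fin.ext_iff] at this
  simp only [Fin.lt_def] at hp hq
  split_ifs at this <;> norm_num at this
  omega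

lemma partialSum_two_smul_single_eq_zero_iff (k i : Fin n) :
    partialSum ℚ k ((2 : ℚ) • Pi.single i 1) = 0 ↔ k < i := by
  rw [map_smul, partialSum_single]
  split_ifs <;> simp_all

lemma partialSum_single_sub_single_eq_zero_iff (k i j : Fin n) :
    partialSum ℚ k (Pi.single i 1 - Pi.single j 1) = 0 ↔ (i ≤ k ↔ j ≤ k) := by
  rw [map_sub, partialSum_single, partialSum_single]
  split_ifs with hi hj hj <;> simp [hi, hj]

lemma partialSum_single_add_single_eq_zero_iff (k : Fin n) {i j : Fin n} (hij : i < j) :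
    partialSum ℚ k (Pi.single i 1 + Pi.single j 1) = 0 ↔ k < i := by
  rw [map_add, partialSum_single, partialSum_single]
  split_ifs <;> norm_num <;> order

lemma card_increasingPairs_filter_le (k : Fin n) :
    #{p ∈ increasingPairs n | p.2 ≤ k} = (k.val + 1).choose 2 := by
  rw [← Fin.card_Iic, ← card_product_filter_lt, increasingPairs, filter_filter]
  congr 1
  ext p
  simp only [mem_filter, mem_univ, true_and, mem_product, mem_Iic]
  grind

lemma card_increasingPairs_filter_gt (k : Fin n) :
    #{p ∈ increasingPairs n | k < p.1} = (n - 1 - k).choose 2 := by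
  rw [← Fin.card_Ioi, ← card_product_filter_lt, increasingPairs, filter_filter]
  congr 1
  ext p
  simp only [mem_filter, mem_univ, true_and, mem_product, mem_Ioi]
  grind

lemma card_filter_longRoots (k : Fin n) :
    #{v ∈ longRoots n | partialSum ℚ k v = 0} = n - 1 - k := by
  simp only [longRoots, filter_image, card_image_of_injective _ two_smul_single_injective,
    partialSum_two_smul_single_eq_zero_iff, filter_lt_eq_Ioi, Fin.card_Ioi]

lemma card_filter_shortRootsSub (k : Fin n) :
    #{v ∈ shortRootsSub n | partialSum ℚ k v = 0}
      = (k.val + 1).choose 2 + (n - 1 - k).choose 2 := by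
  rw [shortRootsSub, filter_image, card_image_of_injOn, ← card_increasingPairs_filter_le,
    ← card_increasingPairs_filter_gt, ← card_union_of_disjoint, ← filter_or]
  · congr 1
    ext p
    simp only [increasingPairs, mem_filter, mem_univ, true_and,
      partialSum_single_sub_single_eq_zero_iff]
    grind
  · exact disjoint_filter.mpr fun p hp hle hlt => by
      simp only [increasingPairs, mem_filter] at hp
      order
  · exact single_sub_single_injOn.mono fun p hp => by
      simp only [increasingPairs, coe_filter, mem_filter, mem_univ, true_and] at hp
      exact hp.1.ne

lemma card_filter_shortRootsAdd (k : Fin n) :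
    #{v ∈ shortRootsAdd n | partialSum ℚ k v = 0} = (n - 1 - k).choose 2 := by
  rw [shortRootsAdd, filter_image, card_image_of_injOn, ← card_increasingPairs_filter_gt]
  · congr 1
    ext p
    simp only [increasingPairs, mem_filter, mem_univ, true_and]
    exact and_congr_right (partialSum_single_add_single_eq_zero_iff k)
  · exact single_add_single_injOn.mono fun p hp => by
      simp only [increasingPairs, coe_filter, mem_filter, mem_univ, true_and] at hp
      exact hp.1

lemma card_filter_positiveRoots (k : Fin n) :
    #{v ∈ positiveRoots n | partialSum ℚ k v = 0}
      = n - 1 - k + (k.val + 1).choose 2 + 2 * (n - 1 - k).choose 2 := by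
  have hdisj : Disjoint (longRoots n ∪ shortRootsSub n) (shortRootsAdd n) :=
    disjoint_union_left.mpr
      ⟨disjoint_longRoots_shortRootsAdd, disjoint_shortRootsSub_shortRootsAdd⟩
  rw [positiveRoots, filter_union, card_union_of_disjoint (disjoint_filter_filter hdisj),
    filter_union, card_union_of_disjoint (disjoint_filter_filter disjoint_longRoots_shortRootsSub),
    card_filter_longRoots, card_filter_shortRootsSub, card_filter_shortRootsAdd]
  ring

end TypeC

theorem stmt_14_general (n : ℕ) :
    ∃ B : Module.Basis (Fin n) ℚ (Fin n → ℚ),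
      (∀ i : Fin n,
        B i = if h : i.val + 1 < n
          then (Pi.single i 1 : Fin n → ℚ) - Pi.single (⟨i.val + 1, h⟩ : Fin n) 1
          else (2 : ℚ) • (Pi.single i 1 : Fin n → ℚ)) ∧
      ∀ k : Fin n,
        ((((Finset.univ.image fun i : Fin n => (2 : ℚ) • (Pi.single i 1 : Fin n → ℚ)) ∪
          ((Finset.univ.filter fun p : Fin n × Fin n => p.1 < p.2).image
            fun p => (Pi.single p.1 1 : Fin n → ℚ) - Pi.single p.2 1) ∪
          ((Finset.univ.filter fun p : Fin n × Fin n => p.1 < p.2).image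
            fun p => (Pi.single p.1 1 : Fin n → ℚ) + Pi.single p.2 1)).filter
          fun v => B.repr v k = 0).card)
        = (n - (k.val + 1)) + (k.val + 1) * k.val / 2
            + (n - (k.val + 1)) * (n - 1 - (k.val + 1)) := by
  refine ⟨TypeC.simpleRootBasis ℚ n, TypeC.simpleRootBasis_apply, fun k => ?_⟩
  rw [filter_congr fun v _ => TypeC.simpleRootBasis_repr_eq_zero_iff v k]
  refine (TypeC.card_filter_positiveRoots k).trans ?_
  rw [Nat.choose_two_right, Nat.choose_two_right, Nat.add_sub_cancel,
    Nat.mul_div_cancel' (Nat.even_mul_pred_self _).two_dvd,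
    show n - (k.val + 1) = n - 1 - k by omega, show n - 1 - (k.val + 1) = n - 1 - k - 1 by omega]

/-- Type C_n: with simple roots `α_i = e_i - e_{i+1}` (for `i < n`) and
`α_n = 2 e_n` in `ℚ^n`, `(α_1, …, α_n)` is a basis, and for `1 ≤ k ≤ n` the
number of positive roots `Φ⁺ = {2e_i} ∪ {e_i - e_j : i < j} ∪ {e_i + e_j : i < j}`
with vanishing coordinate at `α_k` is `(n-k) + k(k-1)/2 + (n-k)(n-1-k)`.
Here `k : Fin n` encodes the root `α_{k+1}` (1-indexed `K = k.val + 1`). -/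
theorem stmt_14 (n : ℕ) (hn : 2 ≤ n) :
    ∃ B : Module.Basis (Fin n) ℚ (Fin n → ℚ),
      (∀ i : Fin n,
        B i = if h : i.val + 1 < n
          then (Pi.single i 1 : Fin n → ℚ) - Pi.single (⟨i.val + 1, h⟩ : Fin n) 1
          else (2 : ℚ) • (Pi.single i 1 : Fin n → ℚ)) ∧
      ∀ k : Fin n,
        ((((Finset.univ.image fun i : Fin n => (2 : ℚ) • (Pi.single i 1 : Fin n → ℚ)) ∪
          ((Finset.univ.filter fun p : Fin n × Fin n => p.1 < p.2).image
            fun p => (Pi.single p.1 1 : Fin n → ℚ) - Pi.single p.2 1) ∪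
          ((Finset.univ.filter fun p : Fin n × Fin n => p.1 < p.2).image
            fun p => (Pi.single p.1 1 : Fin n → ℚ) + Pi.single p.2 1)).filter
          fun v => B.repr v k = 0).card)
        = (n - (k.val + 1)) + (k.val + 1) * k.val / 2
            + (n - (k.val + 1)) * (n - 1 - (k.val + 1)) :=
  stmt_14_general n
end

section
/- Let n ≥ 2 and work in ℚ^n with standard basis e_1, …, e_n. Define α_i = e_i − e_{i+1} for 1 ≤ i ≤ n−1 and α_n = e_{n−1} + e_n. Then (α_1, …, α_n) is a basis of ℚ^n, and for every integer k with 1 ≤ k ≤ n−2, the number of elements of the set Φ⁺ = {e_i − e_j : 1 ≤ i < j ≤ n} ∪ {e_i + e_j : 1 ≤ i < j ≤ n} whose coordinate at α_k in this basis equals 0 is k(k−1)/2 + (n−k)(n−1−k). -/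
/-!
The coordinate at `α_k` is the pairing with the fundamental coweight `ω_k`, which for
`k ≤ n - 2` is `e_1 + ⋯ + e_k`. Hence `e_i - e_j` has vanishing `α_k`-coordinate iff `i` and
`j` lie on the same side of `k`, and `e_i + e_j` iff both lie beyond `k`; counting ordered pairs
in `{1, …, k}` and `{k + 1, …, n}` gives `C(k, 2) + 2 C(n - k, 2)`.
-/

open Finset

section Biorthogonal

variable {ι R M : Type*} [DecidableEq ι] [CommRing R] [AddCommGroup M] [Module R M]
  {v : ι → M} {f : ι → Module.Dual R M}

theorem linearIndependent_of_biorthogonal [Fintype ι]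
    (h : ∀ i j, f i (v j) = if j = i then 1 else 0) : LinearIndependent R v := by
  refine Fintype.linearIndependent_iff.2 fun g hg i => ?_
  simpa [h] using congrArg (f i) hg

theorem Module.Basis.repr_apply_of_biorthogonal (B : Module.Basis ι R M)
    (h : ∀ i j, f i (B j) = if j = i then 1 else 0) (x : M) (i : ι) : B.repr x i = f i x := by
  rw [← B.coord_apply,
    B.ext (f₁ := B.coord i) fun j => by rw [h, B.coord_apply, B.repr_self_apply]]

end Biorthogonal

section SignedPairs

variable {ι R : Type*} [DecidableEq ι] [Ring R] [CharZero R]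

theorem Pi.single_sub_single_injOn :
    Set.InjOn (fun p : ι × ι => (Pi.single p.1 1 - Pi.single p.2 1 : ι → R))
      {p | p.1 ≠ p.2} := by
  rintro ⟨i, j⟩ (hij : i ≠ j) ⟨a, b⟩ -
    (h : Pi.single i 1 - Pi.single j 1 = (Pi.single a 1 - Pi.single b 1 : ι → R))
  rw [sub_eq_sub_iff_add_eq_add,
    Pi.single_add_single_eq_single_add_single one_ne_zero one_ne_zero] at h
  rcases h with ⟨rfl, rfl⟩ | ⟨-, rfl, -⟩ | ⟨h2, -⟩
  · rfl
  · exact absurd rfl hij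
  · exact absurd h2 (by norm_num)

theorem Pi.single_add_single_injOn [LinearOrder ι] :
    Set.InjOn (fun p : ι × ι => (Pi.single p.1 1 + Pi.single p.2 1 : ι → R))
      {p | p.1 < p.2} := by
  rintro ⟨i, j⟩ (hij : i < j) ⟨a, b⟩ (hab : a < b) (h : _ + _ = (_ : ι → R) + _)
  rw [Pi.single_add_single_eq_single_add_single one_ne_zero one_ne_zero] at h
  rcases h with ⟨rfl, rfl⟩ | ⟨-, rfl, rfl⟩ | ⟨h2, -⟩
  · rfl
  · exact absurd (hij.trans hab) (lt_irrefl i)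
  · exact absurd h2 (by norm_num)

theorem Pi.single_sub_single_ne_single_add_single [Fintype ι] (i j a b : ι) :
    (Pi.single i 1 - Pi.single j 1 : ι → R) ≠ Pi.single a 1 + Pi.single b 1 := by
  intro h
  have := congrArg (fun v => ∑ l, v l) h
  norm_num [sum_add_distrib, sum_sub_distrib] at this

end SignedPairs

namespace TypeD

variable {n : ℕ}

/-- Indices are `0`-based. For `n = 1` the truncated `n - 2` makes the only root `2 • e_0`. -/
def simpleRoot (i : Fin n) : Fin n → ℚ :=
  if h : i.val + 1 < n then Pi.single i 1 - Pi.single ⟨i.val + 1, h⟩ 1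
  else Pi.single ⟨n - 2, Nat.sub_lt i.pos two_pos⟩ 1 +
    Pi.single ⟨n - 1, Nat.sub_lt i.pos one_pos⟩ 1

/-- `ω_k = e_0 + ⋯ + e_k` for `k ≤ n - 3`, `ω_{n-2} = (e_0 + ⋯ + e_{n-2} - e_{n-1}) / 2` and
`ω_{n-1} = (e_0 + ⋯ + e_{n-1}) / 2`: the basis dual to the simple roots under `⬝ᵥ`. -/
def fundamentalCoweight (k : Fin n) : Fin n → ℚ := fun i =>
  if k.val + 2 < n then if i ≤ k then 1 else 0
  else if k.val + 2 = n then if i.val + 1 = n then -1 / 2 else 1 / 2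
  else 1 / 2

theorem fundamentalCoweight_dotProduct_simpleRoot (k i : Fin n) :
    fundamentalCoweight k ⬝ᵥ simpleRoot i = if i = k then 1 else 0 := by
  unfold simpleRoot
  split_ifs <;>
    simp only [dotProduct_sub, dotProduct_add, dotProduct_single, mul_one, fundamentalCoweight,
      Fin.le_def] <;>
    split_ifs <;> norm_num <;> omega

theorem linearIndependent_simpleRoot : LinearIndependent ℚ (simpleRoot (n := n)) :=
  linearIndependent_of_biorthogonal (f := fun k => dotProductBilin ℚ ℚ (fundamentalCoweight k))
    fun k i => fundamentalCoweight_dotProduct_simpleRoot k i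

open scoped Classical in
noncomputable def simpleRootBasis (n : ℕ) : Module.Basis (Fin n) ℚ (Fin n → ℚ) :=
  basisOfPiSpaceOfLinearIndependent linearIndependent_simpleRoot

theorem coe_simpleRootBasis : ⇑(simpleRootBasis n) = simpleRoot :=
  coe_basisOfPiSpaceOfLinearIndependent _

theorem simpleRootBasis_repr_apply (v : Fin n → ℚ) (k : Fin n) :
    (simpleRootBasis n).repr v k = fundamentalCoweight k ⬝ᵥ v :=
  (simpleRootBasis n).repr_apply_of_biorthogonal
    (f := fun k => dotProductBilin ℚ ℚ (fundamentalCoweight k))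
    (fun k i => by
      simpa [coe_simpleRootBasis] using fundamentalCoweight_dotProduct_simpleRoot k i) v k

def positiveRoots (n : ℕ) : Finset (Fin n → ℚ) :=
  ((univ.filter fun p : Fin n × Fin n => p.1 < p.2).image
      fun p => Pi.single p.1 1 - Pi.single p.2 1) ∪
    ((univ.filter fun p : Fin n × Fin n => p.1 < p.2).image
      fun p => Pi.single p.1 1 + Pi.single p.2 1)

section CoordinateBelowFork

variable {k : Fin n} (hk : k.val + 2 < n)
include hk

theorem fundamentalCoweight_apply_of_lt (i : Fin n) :
    fundamentalCoweight k i = if i ≤ k then 1 else 0 :=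
  if_pos hk

theorem simpleRootBasis_repr_single_sub_single_eq_zero_iff (i j : Fin n) :
    (simpleRootBasis n).repr (Pi.single i 1 - Pi.single j 1) k = 0 ↔ (i ≤ k ↔ j ≤ k) := by
  simp only [simpleRootBasis_repr_apply, dotProduct_sub, dotProduct_single, mul_one,
    fundamentalCoweight_apply_of_lt hk]
  split_ifs <;> norm_num <;> tauto

theorem simpleRootBasis_repr_single_add_single_eq_zero_iff (i j : Fin n) :
    (simpleRootBasis n).repr (Pi.single i 1 + Pi.single j 1) k = 0 ↔ k < i ∧ k < j := by
  simp only [simpleRootBasis_repr_apply, dotProduct_add, dotProduct_single, mul_one,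
    fundamentalCoweight_apply_of_lt hk]
  split_ifs <;> norm_num <;> grind

theorem card_filter_single_sub_single_eq_zero :
    #((univ.filter fun p : Fin n × Fin n => p.1 < p.2).filter
      fun p => (simpleRootBasis n).repr (Pi.single p.1 1 - Pi.single p.2 1) k = 0) =
      (k.val + 1).choose 2 + (n - 1 - k.val).choose 2 := by
  have hsplit : ((univ.filter fun p : Fin n × Fin n => p.1 < p.2).filter
      fun p => (simpleRootBasis n).repr (Pi.single p.1 1 - Pi.single p.2 1) k = 0) =
      {p ∈ Iic k ×ˢ Iic k | p.1 < p.2} ∪ {p ∈ Ioi k ×ˢ Ioi k | p.1 < p.2} := by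
    ext ⟨i, j⟩
    simp only [mem_filter, mem_univ, true_and, mem_union, mem_product, mem_Iic, mem_Ioi,
      simpleRootBasis_repr_single_sub_single_eq_zero_iff hk]
    grind
  rw [hsplit, card_union_of_disjoint, card_product_filter_lt, card_product_filter_lt,
    Fin.card_Iic, Fin.card_Ioi]
  exact disjoint_left.2 fun p hp hp' => by
    simp only [mem_filter, mem_product, mem_Iic, mem_Ioi] at hp hp'
    exact absurd hp.1.1 (not_le.2 hp'.1.1)

theorem card_filter_single_add_single_eq_zero :
    #((univ.filter fun p : Fin n × Fin n => p.1 < p.2).filter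
      fun p => (simpleRootBasis n).repr (Pi.single p.1 1 + Pi.single p.2 1) k = 0) =
      (n - 1 - k.val).choose 2 := by
  have hsplit : ((univ.filter fun p : Fin n × Fin n => p.1 < p.2).filter
      fun p => (simpleRootBasis n).repr (Pi.single p.1 1 + Pi.single p.2 1) k = 0) =
      {p ∈ Ioi k ×ˢ Ioi k | p.1 < p.2} := by
    ext ⟨i, j⟩
    simp only [mem_filter, mem_univ, true_and, mem_product, mem_Ioi,
      simpleRootBasis_repr_single_add_single_eq_zero_iff hk]
    tauto
  rw [hsplit, card_product_filter_lt, Fin.card_Ioi]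

theorem card_positiveRoots_filter_repr_eq_zero :
    #((positiveRoots n).filter fun v => (simpleRootBasis n).repr v k = 0) =
      (k.val + 1).choose 2 + 2 * (n - 1 - k.val).choose 2 := by
  rw [positiveRoots, filter_union, card_union_of_disjoint, filter_image, filter_image,
    card_image_of_injOn, card_image_of_injOn, card_filter_single_sub_single_eq_zero hk,
    card_filter_single_add_single_eq_zero hk]
  · ring
  · exact Pi.single_add_single_injOn.mono fun p hp => (mem_filter.1 (mem_filter.1 hp).1).2
  · exact Pi.single_sub_single_injOn.mono fun p hp => (mem_filter.1 (mem_filter.1 hp).1).2.ne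
  · exact disjoint_left.2 fun v hv hv' => by
      obtain ⟨⟨i, j⟩, -, rfl⟩ := mem_image.1 (mem_filter.1 hv).1
      obtain ⟨⟨a, b⟩, -, h⟩ := mem_image.1 (mem_filter.1 hv').1
      exact Pi.single_sub_single_ne_single_add_single i j a b h.symm

end CoordinateBelowFork

end TypeD

/-- Type D_n: with simple roots `α_i = e_i - e_{i+1}` (for `i < n`) and
`α_n = e_{n-1} + e_n` in `ℚ^n`, `(α_1, …, α_n)` is a basis, and for
`1 ≤ k ≤ n - 2` the number of positive roots
`Φ⁺ = {e_i - e_j : i < j} ∪ {e_i + e_j : i < j}` with vanishing coordinate at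
`α_k` is `k(k-1)/2 + (n-k)(n-1-k)`.
Here `k : Fin n` encodes the root `α_{k+1}` (1-indexed `K = k.val + 1`). -/
theorem stmt_15 (n : ℕ) :
    ∃ B : Module.Basis (Fin n) ℚ (Fin n → ℚ),
      (∀ i : Fin n,
        B i = if h : i.val + 1 < n
          then (Pi.single i 1 : Fin n → ℚ) - Pi.single (⟨i.val + 1, h⟩ : Fin n) 1
          else (Pi.single (⟨n - 2, by omega⟩ : Fin n) 1 : Fin n → ℚ)
            + Pi.single (⟨n - 1, by omega⟩ : Fin n) 1) ∧
      ∀ k : Fin n, k.val + 1 ≤ n - 2 →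
        (((((Finset.univ.filter fun p : Fin n × Fin n => p.1 < p.2).image
            fun p => (Pi.single p.1 1 : Fin n → ℚ) - Pi.single p.2 1) ∪
          ((Finset.univ.filter fun p : Fin n × Fin n => p.1 < p.2).image
            fun p => (Pi.single p.1 1 : Fin n → ℚ) + Pi.single p.2 1)).filter
          fun v => B.repr v k = 0).card)
        = (k.val + 1) * k.val / 2 + (n - (k.val + 1)) * (n - 1 - (k.val + 1)) := by
  refine ⟨TypeD.simpleRootBasis n, fun i => congrFun TypeD.coe_simpleRootBasis i, fun k hk => ?_⟩
  have hk' : k.val + 2 < n := by omega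
  rw [← TypeD.positiveRoots, TypeD.card_positiveRoots_filter_repr_eq_zero hk',
    Nat.choose_two_right, Nat.choose_two_right,
    Nat.two_mul_div_two_of_even (Nat.even_mul_pred_self _)]
  congr 2
  omega
end
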